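/- Let ρ > 0, θ ∈ [1/2, 1], τ > 0 and consider the scalar scheme for the undamped oscillator written in first-order form: (η^{n+θ} − ηⁿ)/(θτ) = ξ^{n+θ}, ρ(ξ^{n+θ} − ξⁿ)/(θτ) = −k η^{n+θ} with k > 0, followed by the extrapolations ηⁿ⁺¹ = θ⁻¹ η^{n+θ} − (θ⁻¹ − 1)ηⁿ and ξⁿ⁺¹ = θ⁻¹ ξ^{n+θ} − (θ⁻¹ − 1)ξⁿ. Then the discrete energy Eⁿ = (ρ/2)(ξⁿ)² + (k/2)(ηⁿ)² satisfies Eⁿ⁺¹ ≤ Eⁿ for all n. -/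

import Mathlib

/-!
Write `δξ = ξ^{n+θ} - ξⁿ`, `δη = η^{n+θ} - ηⁿ`. Since the extrapolated value is `ηⁿ + θ⁻¹ δη`,
`Eⁿ⁺¹ - Eⁿ = θ⁻¹ (ρ δξ ξ^{n+θ} + k δη η^{n+θ}) + θ⁻² (1/2 - θ) (ρ δξ² + k δη²)`.
The backward Euler step makes the first bracket vanish (it is `θτ (-k η^{n+θ} ξ^{n+θ} + k ξ^{n+θ} η^{n+θ})`),
and the second term is nonpositive exactly when `θ ≥ 1/2`.
-/

noncomputable def oscillatorEnergy (ρ k ξ η : ℝ) : ℝ := ρ / 2 * ξ ^ 2 + k / 2 * η ^ 2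

lemma extrapolate_sq_sub_sq {K : Type*} [Field K] {θ : K} (hθ : θ ≠ 0) (a b : K) :
    (θ⁻¹ * b - (θ⁻¹ - 1) * a) ^ 2 - a ^ 2
      = 2 * θ⁻¹ * ((b - a) * b) + θ⁻¹ ^ 2 * (1 - 2 * θ) * (b - a) ^ 2 := by
  field_simp
  ring

lemma oscillatorEnergy_extrapolate_sub {θ : ℝ} (hθ : θ ≠ 0) (ρ k ξ η ξθ ηθ : ℝ) :
    oscillatorEnergy ρ k (θ⁻¹ * ξθ - (θ⁻¹ - 1) * ξ) (θ⁻¹ * ηθ - (θ⁻¹ - 1) * η)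
        - oscillatorEnergy ρ k ξ η
      = θ⁻¹ * (ρ * (ξθ - ξ) * ξθ + k * (ηθ - η) * ηθ)
        + θ⁻¹ ^ 2 * (1 / 2 - θ) * (ρ * (ξθ - ξ) ^ 2 + k * (ηθ - η) ^ 2) := by
  have hξ := extrapolate_sq_sub_sq hθ ξ ξθ
  have hη := extrapolate_sq_sub_sq hθ η ηθ
  unfold oscillatorEnergy
  linear_combination ρ / 2 * hξ + k / 2 * hη

/-- For `h = 0` this still holds through the junk value `x / 0 = 0`, which forces `ξθ = 0` and
`k * ηθ = 0`. -/
lemma backwardEuler_cross_eq_zero {ρ k h ξ η ξθ ηθ : ℝ}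
    (hη : (ηθ - η) / h = ξθ) (hξ : ρ * ((ξθ - ξ) / h) = -k * ηθ) :
    ρ * (ξθ - ξ) * ξθ + k * (ηθ - η) * ηθ = 0 := by
  rcases eq_or_ne h 0 with rfl | hh
  · simp only [div_zero, mul_zero] at hη hξ
    subst hη
    linear_combination (ηθ - η) * hξ
  · rw [div_eq_iff hh] at hη
    rw [mul_div_assoc', div_eq_iff hh] at hξ
    linear_combination ξθ * hξ + k * ηθ * hη

lemma oscillatorEnergy_extrapolate_le {ρ k θ : ℝ} (hρ : 0 ≤ ρ) (hk : 0 ≤ k) (hθ : 1 / 2 ≤ θ)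
    {ξ η ξθ ηθ : ℝ} (hcross : ρ * (ξθ - ξ) * ξθ + k * (ηθ - η) * ηθ = 0) :
    oscillatorEnergy ρ k (θ⁻¹ * ξθ - (θ⁻¹ - 1) * ξ) (θ⁻¹ * ηθ - (θ⁻¹ - 1) * η)
      ≤ oscillatorEnergy ρ k ξ η := by
  have hdiff := oscillatorEnergy_extrapolate_sub (by positivity : θ ≠ 0) ρ k ξ η ξθ ηθ
  rw [hcross, mul_zero, zero_add] at hdiff
  have hnum : θ⁻¹ ^ 2 * (1 / 2 - θ) ≤ 0 :=
    mul_nonpos_of_nonneg_of_nonpos (by positivity) (by linarith)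
  have hsq : 0 ≤ ρ * (ξθ - ξ) ^ 2 + k * (ηθ - η) ^ 2 := by positivity
  linarith [mul_nonpos_of_nonpos_of_nonneg hnum hsq]

theorem oscillator_energy_dissipation_general (ρ k θ τ : ℝ)
    (hρ : 0 < ρ) (hk : 0 < k) (hθ : θ ∈ Set.Icc (1/2 : ℝ) 1)
    (ηn ξn ηnθ ξnθ ηn1 ξn1 : ℝ)
    (hBE1 : (ηnθ - ηn) / (θ * τ) = ξnθ)
    (hBE2 : ρ * ((ξnθ - ξn) / (θ * τ)) = -k * ηnθ)
    (hFE1 : ηn1 = θ⁻¹ * ηnθ - (θ⁻¹ - 1) * ηn)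
    (hFE2 : ξn1 = θ⁻¹ * ξnθ - (θ⁻¹ - 1) * ξn) :
    ρ / 2 * ξn1 ^ 2 + k / 2 * ηn1 ^ 2 ≤ ρ / 2 * ξn ^ 2 + k / 2 * ηn ^ 2 := by
  subst hFE1 hFE2
  exact oscillatorEnergy_extrapolate_le hρ.le hk.le hθ.1 (backwardEuler_cross_eq_zero hBE1 hBE2)

/-- Unconditional stability of the refactorized Cauchy θ-method for the scalar
undamped oscillator: with `θ ∈ [1/2,1]`, the BE step followed by linear
extrapolation dissipates the discrete energy `E = (ρ/2)ξ² + (k/2)η²`. -/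
theorem oscillator_energy_dissipation (ρ k θ τ : ℝ)
    (hρ : 0 < ρ) (hk : 0 < k) (hθ : θ ∈ Set.Icc (1/2 : ℝ) 1) (hτ : 0 < τ)
    (ηn ξn ηnθ ξnθ ηn1 ξn1 : ℝ)
    (hBE1 : (ηnθ - ηn) / (θ * τ) = ξnθ)
    (hBE2 : ρ * ((ξnθ - ξn) / (θ * τ)) = -k * ηnθ)
    (hFE1 : ηn1 = θ⁻¹ * ηnθ - (θ⁻¹ - 1) * ηn)
    (hFE2 : ξn1 = θ⁻¹ * ξnθ - (θ⁻¹ - 1) * ξn) :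
    ρ / 2 * ξn1 ^ 2 + k / 2 * ηn1 ^ 2 ≤ ρ / 2 * ξn ^ 2 + k / 2 * ηn ^ 2 :=
  oscillator_energy_dissipation_general ρ k θ τ hρ hk hθ ηn ξn ηnθ ξnθ ηn1 ξn1 hBE1 hBE2 hFE1 hFE2
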